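/- For all monotone maps φ : [m'] → [m] and ψ : [n'] → [n], one has P(φ,ψ) ∘ κ_{m',n'} = κ_{m,n} ∘ c(φ⊔ψ) as maps C(m'+1+n') → P(m,n), where P(φ,ψ) : P(m',n') → P(m,n) is the chain map induced on the pushouts by c(φ⊔ψ) : C(m'+1+n') → C(m+1+n) and id_{C(1)} ⊗ c(ψ) : C(1)⊗C(n') → C(1)⊗C(n). -/

import Mathlib

/-!
We represent the (augmented) normalized chain complex `C(N)` of the standard `N`-simplex by the
free abelian group on the finite subsets of `{0,…,N}`, a subset of cardinality `p+1` standing for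
the strictly increasing `(p+1)`-tuple of its elements (a `p`-chain); the differential is the
alternating sum of the tuples obtained by deleting one entry (and vanishes on `0`-chains), and
the augmentation sends every `0`-chain basis element to `1` (and vanishes in higher degrees).
-/

noncomputable section

abbrev Ch (α : Type) := Finset α →₀ ℤ

/-- index of `a` in `s`: the number of smaller elements of `s`. -/
def idx {α : Type} [LinearOrder α] (s : Finset α) (a : α) : ℕ :=
  (s.filter (fun b => b < a)).card

/-- value of the simplicial differential on a basis tuple:
`d(i₀,…,i_p) = Σₖ (−1)^k (i₀,…,î_k,…,i_p)` for `p ≥ 1`, and `0` on `0`-chains. -/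
def dAux {α : Type} [LinearOrder α] (s : Finset α) : Ch α :=
  if 2 ≤ s.card then
    ∑ a ∈ s, ((-1 : ℤ) ^ (idx s a)) • Finsupp.single (s.erase a) (1 : ℤ)
  else 0

/-- the differential of `C(N)`. -/
def chD (α : Type) [LinearOrder α] : Ch α →ₗ[ℤ] Ch α :=
  Finsupp.lift _ ℤ _ dAux

/-- the augmentation of `C(N)`: `e(i₀) = 1` on `0`-chains, `0` in higher degrees. -/
def chE (α : Type) : Ch α →ₗ[ℤ] ℤ :=
  Finsupp.lift _ ℤ _ (fun s => if s.card = 1 then (1 : ℤ) else 0)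

/-- The chain map `c(ψ) : C(N') → C(N)` induced by a (monotone) map `ψ`,
`(i₀,…,i_p) ↦ (ψ(i₀),…,ψ(i_p))`, with the convention that a tuple with a repeated entry
denotes `0`. -/
def chMap {α β : Type} [DecidableEq β] (ψ : α → β) : Ch α →ₗ[ℤ] Ch β :=
  Finsupp.lift _ ℤ _ (fun s =>
    if (s.image ψ).card = s.card then Finsupp.single (s.image ψ) (1 : ℤ) else 0)

/-- Basis indexing set for the pushout `P(m,n)`:
`inl s` is a plain tuple in `{0,…,m+1+n}`; `inr (a, t)` with `1 ∈ a ⊆ {0,1}` and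
`t` a nonempty subset of `{0,…,n} ≅ {m+1,…,m+1+n}` represents the tensor basis element `a ⊗ t`
(`({1}, t) = (1)⊗t` and `({0,1}, t) = (0,1)⊗t`); the element `(0)⊗t` is identified with the
corresponding plain tuple. Other indices are spurious and irrelevant for the maps below. -/
abbrev PBs (m n : ℕ) := Finset (Fin (m+1+n+1)) ⊕ (Finset (Fin 2) × Finset (Fin (n+1)))

abbrev Pch (m n : ℕ) := PBs m n →₀ ℤ

/-- the inclusion of `{0,…,n}` as `{m+1,…,m+1+n}` in `{0,…,m+1+n}`. -/
def pshift (m n : ℕ) : Fin (n+1) → Fin (m+1+n+1) :=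
  fun j => ⟨m + 1 + (j : ℕ), by have := j.isLt; omega⟩

/-- the identification `{m+1,…,m+1+n} ≅ {0,…,n}` (sending `i` to `i − (m+1)`). -/
def punshift (m n : ℕ) : Fin (m+1+n+1) → Fin (n+1) :=
  fun i => ⟨(i : ℕ) - (m + 1), by have := i.isLt; omega⟩

/-- differential of `P(m,n)` on basis elements: `d` on plain tuples,
`d((1)⊗t) = (1)⊗d(t)`, and `d((0,1)⊗t) = (1)⊗t − ι(t) − (0,1)⊗d(t)`, where `ι(t)` is the
plain tuple with entries in `{m+1,…,m+1+n}` corresponding to `t`. -/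
def pdAux (m n : ℕ) : PBs m n → Pch m n
  | .inl s =>
      if 2 ≤ s.card then
        ∑ a ∈ s, ((-1 : ℤ) ^ (idx s a)) • Finsupp.single (Sum.inl (s.erase a) : PBs m n) (1 : ℤ)
      else 0
  | .inr p =>
      if p.1 = {1} then
        (if 2 ≤ p.2.card then
          ∑ b ∈ p.2, ((-1 : ℤ) ^ (idx p.2 b)) •
            Finsupp.single (Sum.inr (({1} : Finset (Fin 2)), p.2.erase b) : PBs m n) (1 : ℤ)
        else 0)
      else if p.1 = {0, 1} ∧ p.2.Nonempty then
        Finsupp.single (Sum.inr (({1} : Finset (Fin 2)), p.2) : PBs m n) 1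
        - Finsupp.single (Sum.inl (p.2.image (pshift m n)) : PBs m n) 1
        - (if 2 ≤ p.2.card then
            ∑ b ∈ p.2, ((-1 : ℤ) ^ (idx p.2 b)) •
              Finsupp.single (Sum.inr (({0, 1} : Finset (Fin 2)), p.2.erase b) : PBs m n) (1 : ℤ)
          else 0)
      else 0

/-- the differential of `P(m,n)`. -/
def pD (m n : ℕ) : Pch m n →ₗ[ℤ] Pch m n := Finsupp.lift _ ℤ _ (pdAux m n)

/-- the augmentation of `P(m,n)`, extending that of `C(m+1+n)` by `e((1)⊗(i₀)) = 1`. -/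
def pE (m n : ℕ) : Pch m n →ₗ[ℤ] ℤ :=
  Finsupp.lift _ ℤ _ (fun x => match x with
    | .inl s => if s.card = 1 then (1 : ℤ) else 0
    | .inr p => if p.1 = {1} ∧ p.2.card = 1 then (1 : ℤ) else 0)

/-- `κ_{m,n}` on a basis tuple `s`, in terms of `r := card {i ∈ s | i ≤ m}`:
`κ(s) = s` if `r ≥ 2`; `κ(s) = s + (0,1)⊗(i₁,…,i_p)` if `r = 1` (the second term being `0`
when `p = 0`); `κ(s) = (1)⊗s` if `r = 0`. -/
def kapAux (m n : ℕ) (s : Finset (Fin (m+1+n+1))) : Pch m n :=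
  if 2 ≤ (s.filter (fun i : Fin (m+1+n+1) => (i : ℕ) ≤ m)).card then
    Finsupp.single (Sum.inl s : PBs m n) 1
  else if (s.filter (fun i : Fin (m+1+n+1) => (i : ℕ) ≤ m)).card = 1 then
    Finsupp.single (Sum.inl s : PBs m n) 1 +
      (if (s.filter (fun i : Fin (m+1+n+1) => m < (i : ℕ))).Nonempty then
        Finsupp.single
          (Sum.inr (({0, 1} : Finset (Fin 2)),
            (s.filter (fun i : Fin (m+1+n+1) => m < (i : ℕ))).image (punshift m n)) : PBs m n) 1
      else 0)
  else Finsupp.single (Sum.inr (({1} : Finset (Fin 2)), s.image (punshift m n)) : PBs m n) 1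

/-- the graded `ℤ`-linear map `κ_{m,n} : C(m+1+n) → P(m,n)`. -/
def kap (m n : ℕ) : Ch (Fin (m+1+n+1)) →ₗ[ℤ] Pch m n := Finsupp.lift _ ℤ _ (kapAux m n)

/-- the join `φ ⊔ ψ : [m'+1+n'] → [m+1+n]` of two maps, sending `i` to `φ(i)` for `i ≤ m'`
and to `m+1+ψ(i−1−m')` for `i ≥ m'+1`. -/
def joinFun {m' m n' n : ℕ} (φ : Fin (m'+1) → Fin (m+1)) (ψ : Fin (n'+1) → Fin (n+1)) :
    Fin (m'+1+n'+1) → Fin (m+1+n+1) := fun i =>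
  if h : (i : ℕ) ≤ m' then Fin.castLE (by omega) (φ ⟨(i : ℕ), by omega⟩)
  else
    have h2 : (i : ℕ) - (m' + 1) < n' + 1 := by have := i.isLt; omega
    Fin.castLE (by omega) (Fin.natAdd (m+1) (ψ ⟨(i : ℕ) - (m' + 1), h2⟩))

/-- the map `P(φ,ψ) : P(m',n') → P(m,n)` induced on the pushouts by `c(φ⊔ψ)` on plain tuples
and by `id_{C(1)} ⊗ c(ψ)` on the tensor part. -/
def pMap {m' m n' n : ℕ} (φ : Fin (m'+1) → Fin (m+1)) (ψ : Fin (n'+1) → Fin (n+1)) :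
    Pch m' n' →ₗ[ℤ] Pch m n :=
  Finsupp.lift _ ℤ _ (fun x => match x with
    | .inl s =>
        if (s.image (joinFun φ ψ)).card = s.card then
          Finsupp.single (Sum.inl (s.image (joinFun φ ψ)) : PBs m n) (1 : ℤ)
        else 0
    | .inr p =>
        if (p.2.image ψ).card = p.2.card then
          Finsupp.single (Sum.inr (p.1, p.2.image ψ) : PBs m n) (1 : ℤ)
        else 0)

/-!
The join `φ ⊔ ψ` maps `{0,…,m'}` into `{0,…,m}` and `{m'+1,…}` into `{m+1,…}`, where it is `ψ`
up to the shift. So it preserves the number `r` of entries `≤ m` of a tuple on which it is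
injective, and it is injective on a tuple exactly when it is injective on both parts. The two
sides then agree on every basis tuple, case by case on `r ∈ {0, 1, ≥ 2}`.
-/

theorem card_image_eq_card_iff_filter {α β : Type*} [DecidableEq β] {f : α → β} {s : Finset α}
    (p : α → Prop) [DecidablePred p] (q : β → Prop) [DecidablePred q]
    (hf : ∀ a ∈ s, q (f a) ↔ p a) :
    (s.image f).card = s.card ↔
      ((s.filter p).image f).card = (s.filter p).card ∧
        ((s.filter (¬ p ·)).image f).card = (s.filter (¬ p ·)).card := by
  have hq : (s.image f).filter q = (s.filter p).image f := by
    rw [Finset.filter_image]; exact congrArg _ (Finset.filter_congr hf)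
  have hnq : (s.image f).filter (¬ q ·) = (s.filter (¬ p ·)).image f := by
    rw [Finset.filter_image]
    exact congrArg _ (Finset.filter_congr fun a ha => not_congr (hf a ha))
  have himage := Finset.card_filter_add_card_filter_not (s := s.image f) q
  have hsource := Finset.card_filter_add_card_filter_not (s := s) p
  have hp := Finset.card_image_le (s := s.filter p) (f := f)
  have hnp := Finset.card_image_le (s := s.filter (¬ p ·)) (f := f)
  rw [hq, hnq] at himage
  omega

@[simp]
theorem kap_single (m n : ℕ) (s : Finset (Fin (m+1+n+1))) :
    kap m n (Finsupp.single s 1) = kapAux m n s := by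
  simp [kap, Finsupp.lift_apply]

@[simp]
theorem chMap_single {α β : Type} [DecidableEq β] (f : α → β) (s : Finset α) :
    chMap f (Finsupp.single s 1) =
      if (s.image f).card = s.card then Finsupp.single (s.image f) 1 else 0 := by
  simp [chMap, Finsupp.lift_apply]

section Join

variable {m' m n' n : ℕ} (φ : Fin (m'+1) → Fin (m+1)) (ψ : Fin (n'+1) → Fin (n+1))

@[simp]
theorem pMap_single_inl (s : Finset (Fin (m'+1+n'+1))) :
    pMap φ ψ (Finsupp.single (Sum.inl s) 1) =
      if (s.image (joinFun φ ψ)).card = s.card then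
        Finsupp.single (Sum.inl (s.image (joinFun φ ψ))) 1
      else 0 := by
  simp [pMap, Finsupp.lift_apply]

@[simp]
theorem pMap_single_inr (a : Finset (Fin 2)) (t : Finset (Fin (n'+1))) :
    pMap φ ψ (Finsupp.single (Sum.inr (a, t)) 1) =
      if (t.image ψ).card = t.card then Finsupp.single (Sum.inr (a, t.image ψ)) 1 else 0 := by
  simp [pMap, Finsupp.lift_apply]

theorem joinFun_le_iff (i : Fin (m'+1+n'+1)) : (joinFun φ ψ i : ℕ) ≤ m ↔ (i : ℕ) ≤ m' := by
  unfold joinFun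
  split_ifs with h
  · simpa [h] using Fin.is_le _
  · simp only [Fin.val_castLE, Fin.val_natAdd]
    omega

theorem lt_joinFun_iff (i : Fin (m'+1+n'+1)) : m < (joinFun φ ψ i : ℕ) ↔ m' < (i : ℕ) := by
  simpa only [not_le] using (joinFun_le_iff φ ψ i).not

theorem punshift_joinFun {i : Fin (m'+1+n'+1)} (hi : m' < (i : ℕ)) :
    punshift m n (joinFun φ ψ i) = ψ (punshift m' n' i) := by
  unfold joinFun
  rw [dif_neg (by omega)]
  ext
  simp only [punshift, Fin.val_castLE, Fin.val_natAdd]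
  omega

theorem punshift_injOn (m n : ℕ) : Set.InjOn (punshift m n) {i | m < (i : ℕ)} := by
  intro a ha b hb hab
  have := congrArg Fin.val hab
  simp only [punshift] at this
  exact Fin.ext (by simp only [Set.mem_ofPred_eq] at ha hb; omega)

theorem card_image_punshift {t : Finset (Fin (m+1+n+1))} (ht : ∀ i ∈ t, m < (i : ℕ)) :
    (t.image (punshift m n)).card = t.card :=
  Finset.card_image_of_injOn fun _ ha _ hb => punshift_injOn m n (ht _ ha) (ht _ hb)

theorem filter_image_joinFun_le (s : Finset (Fin (m'+1+n'+1))) :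
    (s.image (joinFun φ ψ)).filter (fun j : Fin (m+1+n+1) => (j : ℕ) ≤ m) =
      (s.filter (fun i : Fin (m'+1+n'+1) => (i : ℕ) ≤ m')).image (joinFun φ ψ) := by
  rw [Finset.filter_image]
  exact congrArg _ (Finset.filter_congr fun i _ => joinFun_le_iff φ ψ i)

theorem filter_image_joinFun_gt (s : Finset (Fin (m'+1+n'+1))) :
    (s.image (joinFun φ ψ)).filter (fun j : Fin (m+1+n+1) => m < (j : ℕ)) =
      (s.filter (fun i : Fin (m'+1+n'+1) => m' < (i : ℕ))).image (joinFun φ ψ) := by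
  rw [Finset.filter_image]
  exact congrArg _ (Finset.filter_congr fun i _ => lt_joinFun_iff φ ψ i)

theorem card_image_joinFun_eq_iff (s : Finset (Fin (m'+1+n'+1))) :
    (s.image (joinFun φ ψ)).card = s.card ↔
      ((s.filter (fun i : Fin (m'+1+n'+1) => (i : ℕ) ≤ m')).image (joinFun φ ψ)).card =
          (s.filter (fun i : Fin (m'+1+n'+1) => (i : ℕ) ≤ m')).card ∧
        ((s.filter (fun i : Fin (m'+1+n'+1) => m' < (i : ℕ))).image (joinFun φ ψ)).card =
          (s.filter (fun i : Fin (m'+1+n'+1) => m' < (i : ℕ))).card := by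
  simpa only [not_le] using
    card_image_eq_card_iff_filter (fun i : Fin (m'+1+n'+1) => (i : ℕ) ≤ m')
      (fun j : Fin (m+1+n+1) => (j : ℕ) ≤ m) fun i _ => joinFun_le_iff φ ψ i

theorem image_punshift_image_eq {t : Finset (Fin (m'+1+n'+1))} (ht : ∀ i ∈ t, m' < (i : ℕ)) :
    (t.image (punshift m' n')).image ψ = (t.image (joinFun φ ψ)).image (punshift m n) := by
  simp only [Finset.image_image]
  exact Finset.image_congr fun i hi => (punshift_joinFun φ ψ (ht i hi)).symm

theorem card_image_image_punshift_iff {t : Finset (Fin (m'+1+n'+1))}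
    (ht : ∀ i ∈ t, m' < (i : ℕ)) :
    ((t.image (punshift m' n')).image ψ).card = (t.image (punshift m' n')).card ↔
      (t.image (joinFun φ ψ)).card = t.card := by
  have himage : ∀ j ∈ t.image (joinFun φ ψ), m < (j : ℕ) := by
    simp only [Finset.mem_image, forall_exists_index, and_imp, forall_apply_eq_imp_iff₂]
    exact fun i hi => (lt_joinFun_iff φ ψ i).2 (ht i hi)
  rw [image_punshift_image_eq φ ψ ht, card_image_punshift himage, card_image_punshift ht]

theorem pMap_kapAux_of_two_le {s : Finset (Fin (m'+1+n'+1))}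
    (h : 2 ≤ (s.filter (fun i : Fin (m'+1+n'+1) => (i : ℕ) ≤ m')).card) :
    pMap φ ψ (kapAux m' n' s) = kap m n (chMap (joinFun φ ψ) (Finsupp.single s 1)) := by
  rw [kapAux, if_pos h, pMap_single_inl, chMap_single]
  by_cases hinj : (s.image (joinFun φ ψ)).card = s.card
  · have hlow := ((card_image_joinFun_eq_iff φ ψ s).1 hinj).1
    rw [if_pos hinj, if_pos hinj, kap_single, kapAux,
      if_pos (by rwa [filter_image_joinFun_le, hlow])]
  · rw [if_neg hinj, if_neg hinj, map_zero]

theorem pMap_kapAux_of_eq_one {s : Finset (Fin (m'+1+n'+1))}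
    (h : (s.filter (fun i : Fin (m'+1+n'+1) => (i : ℕ) ≤ m')).card = 1) :
    pMap φ ψ (kapAux m' n' s) = kap m n (chMap (joinFun φ ψ) (Finsupp.single s 1)) := by
  set high := s.filter (fun i : Fin (m'+1+n'+1) => m' < (i : ℕ))
  have hlow :
      ((s.filter (fun i : Fin (m'+1+n'+1) => (i : ℕ) ≤ m')).image (joinFun φ ψ)).card = 1 := by
    obtain ⟨a, ha⟩ := Finset.card_eq_one.1 h
    simp [ha]
  have hinj : (s.image (joinFun φ ψ)).card = s.card ↔
      (high.image (joinFun φ ψ)).card = high.card := by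
    rw [card_image_joinFun_eq_iff, hlow, h]
    exact and_iff_right rfl
  have hhigh_mem : ∀ i ∈ high, m' < (i : ℕ) := fun i hi => (Finset.mem_filter.1 hi).2
  have hhigh := card_image_image_punshift_iff φ ψ hhigh_mem
  simp only [kapAux, h, Nat.not_ofNat_le_one, if_false, if_true, map_add,
    pMap_single_inl, chMap_single]
  by_cases hinjs : (s.image (joinFun φ ψ)).card = s.card
  · simp only [if_pos hinjs, kap_single, kapAux, filter_image_joinFun_le, filter_image_joinFun_gt,
      hlow, Nat.not_ofNat_le_one, if_false, if_true, Finset.image_nonempty]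
    congr 1
    split_ifs
    · rw [pMap_single_inr, if_pos (hhigh.2 (hinj.1 hinjs)), image_punshift_image_eq φ ψ hhigh_mem]
    · rfl
  · rw [if_neg hinjs, if_neg hinjs, map_zero, zero_add]
    split_ifs
    · rw [pMap_single_inr, if_neg (mt hhigh.1 (mt hinj.2 hinjs))]
    · rfl

theorem pMap_kapAux_of_eq_zero {s : Finset (Fin (m'+1+n'+1))}
    (h : (s.filter (fun i : Fin (m'+1+n'+1) => (i : ℕ) ≤ m')).card = 0) :
    pMap φ ψ (kapAux m' n' s) = kap m n (chMap (joinFun φ ψ) (Finsupp.single s 1)) := by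
  have hs : ∀ i ∈ s, m' < (i : ℕ) := fun i hi =>
    not_le.1 (Finset.filter_eq_empty_iff.1 (Finset.card_eq_zero.1 h) hi)
  have hlow :
      ((s.image (joinFun φ ψ)).filter (fun j : Fin (m+1+n+1) => (j : ℕ) ≤ m)).card = 0 := by
    rw [filter_image_joinFun_le, Finset.card_eq_zero.1 h, Finset.image_empty, Finset.card_empty]
  have himage := card_image_image_punshift_iff φ ψ hs
  simp only [kapAux, h, nonpos_iff_eq_zero, OfNat.ofNat_ne_zero, zero_ne_one, if_false,
    pMap_single_inr, chMap_single]
  by_cases hinj : (s.image (joinFun φ ψ)).card = s.card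
  · rw [if_pos (himage.2 hinj), if_pos hinj, kap_single]
    simp only [kapAux, hlow, nonpos_iff_eq_zero, OfNat.ofNat_ne_zero, zero_ne_one, if_false,
      image_punshift_image_eq φ ψ hs]
  · rw [if_neg (mt himage.1 hinj), if_neg hinj, map_zero]

end Join

/-- STATEMENT 10: for all monotone maps `φ : [m'] → [m]` and `ψ : [n'] → [n]`,
`P(φ,ψ) ∘ κ_{m',n'} = κ_{m,n} ∘ c(φ⊔ψ)`. -/
theorem kap_natural {m' m n' n : ℕ}
    (φ : Fin (m'+1) →o Fin (m+1)) (ψ : Fin (n'+1) →o Fin (n+1)) :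
    (pMap ⇑φ ⇑ψ).comp (kap m' n') = (kap m n).comp (chMap (joinFun ⇑φ ⇑ψ)) := by
  refine Finsupp.lhom_ext' fun s => LinearMap.ext_ring ?_
  simp only [LinearMap.comp_apply, Finsupp.lsingle_apply, kap_single]
  rcases Nat.lt_or_ge (s.filter (fun i : Fin (m'+1+n'+1) => (i : ℕ) ≤ m')).card 2 with h | h
  · interval_cases hr : (s.filter (fun i : Fin (m'+1+n'+1) => (i : ℕ) ≤ m')).card
    · exact pMap_kapAux_of_eq_zero φ ψ hr
    · exact pMap_kapAux_of_eq_one φ ψ hr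
  · exact pMap_kapAux_of_two_le φ ψ h

end
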